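/- The inverse-probability-weighted representation of the mediation functional holds exactly at the true propensities: E[ 1{A = a} / π_A(a | W) · r(M, W) · Ŷ ] = ψ, where ψ = Σ_{w ∈ 𝕎} P(W = w) · Σ_{m ∈ 𝕄} E[Ŷ | A = a, M = m, W = w] · P(M = m | A = a', W = w). (IPW identification of the counterfactual mean of the derived outcome.) -/

import Mathlib

/-!
The integrand depends on `ω` only through `(A, M, W)` and `Y`, so the expectation splits over
the finitely many atoms `{A = α, M = m, W = w}`; only `α = a` contributes, and there
`∫_{atom} Y = P(a, m, w) · b(m, w)`. On each atom the weight cancels: by Bayes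
`π_A(a' | m, w) / π_A(a | m, w) · P(a, m, w) = P(a', m, w)`, and
`P(a', m, w) / π_A(a' | w) = P(W = w) · P(M = m | A = a', W = w)`.
-/

open MeasureTheory ProbabilityTheory
open scoped ENNReal BigOperators

section

variable {Ω : Type*} [MeasurableSpace Ω] {μ : Measure Ω}

theorem integral_mul_comp_eq_sum_setIntegral {ι : Type*} [Fintype ι] [MeasurableSpace ι]
    [MeasurableSingletonClass ι] {X : Ω → ι} (hX : Measurable X) (g : ι → ℝ) {Y : Ω → ℝ}
    (hY : Integrable Y μ) :
    ∫ ω, g (X ω) * Y ω ∂μ = ∑ i, g i * ∫ ω in X ⁻¹' {i}, Y ω ∂μ := by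
  have hfiber : ∀ i, MeasurableSet (X ⁻¹' {i}) := fun i => hX (measurableSet_singleton i)
  have hg : ∀ i, Set.EqOn (fun ω => g (X ω) * Y ω) (fun ω => g i * Y ω) (X ⁻¹' {i}) :=
    fun i ω (hω : X ω = i) => congrArg (fun j => g j * Y ω) hω
  calc ∫ ω, g (X ω) * Y ω ∂μ = ∑ i, ∫ ω in X ⁻¹' {i}, g (X ω) * Y ω ∂μ := by
        have hcover : ⋃ i, X ⁻¹' {i} = Set.univ := by ext; simp
        rw [← setIntegral_univ, ← hcover, integral_iUnion_fintype hfiber (pairwise_disjoint_fiber X)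
          fun i => (hY.const_mul (g i)).integrableOn.congr_fun (hg i).symm (hfiber i)]
    _ = ∑ i, g i * ∫ ω in X ⁻¹' {i}, Y ω ∂μ := by
        refine Finset.sum_congr rfl fun i _ => ?_
        rw [setIntegral_congr_fun (hfiber i) (hg i), integral_const_mul]

theorem setIntegral_eq_measureReal_smul_integral_cond {E : Type*} [NormedAddCommGroup E]
    [NormedSpace ℝ E] {s : Set Ω} (hs : μ s ≠ ∞) (f : Ω → E) :
    ∫ ω in s, f ω ∂μ = μ.real s • ∫ ω, f ω ∂μ[|s] := by
  rw [ProbabilityTheory.cond, integral_smul_measure, smul_smul, ENNReal.toReal_inv,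
    measureReal_def]
  rcases eq_or_ne (μ s) 0 with hs₀ | hs₀
  · simp [Measure.restrict_eq_zero.2 hs₀]
  rw [mul_inv_cancel₀ (ENNReal.toReal_ne_zero.2 ⟨hs₀, hs⟩), one_smul]

theorem cond_toReal_eq_div {s : Set Ω} (hs : MeasurableSet s) (t : Set Ω) :
    (μ[t|s]).toReal = μ.real (s ∩ t) / μ.real s := by
  rw [cond_apply hs, ENNReal.toReal_mul, ENNReal.toReal_inv, measureReal_def, measureReal_def,
    inv_mul_eq_div]

theorem cond_toReal_div_mul_measureReal_inter [IsFiniteMeasure μ] {v t t' : Set Ω}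
    (hv : MeasurableSet v) (h : μ (t ∩ v) ≠ 0) :
    (μ[t'|v]).toReal / (μ[t|v]).toReal * μ.real (t ∩ v) = μ.real (t' ∩ v) := by
  have htv : μ.real (t ∩ v) ≠ 0 := (measureReal_ne_zero_iff (measure_ne_top _ _)).2 h
  have hv₀ : μ.real v ≠ 0 := (measureReal_ne_zero_iff (measure_ne_top _ _)).2 fun h₀ =>
    h (measure_mono_null Set.inter_subset_right h₀)
  rw [cond_toReal_eq_div hv, cond_toReal_eq_div hv, Set.inter_comm v t, Set.inter_comm v t']
  field_simp

theorem measureReal_inter_div_cond_toReal {s t u : Set Ω} (hs : MeasurableSet s)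
    (ht : MeasurableSet t) :
    μ.real (t ∩ (u ∩ s)) / (μ[t|s]).toReal = μ.real s * (μ[u|t ∩ s]).toReal := by
  rw [cond_toReal_eq_div hs, cond_toReal_eq_div (ht.inter hs), Set.inter_comm s t,
    ← Set.inter_assoc, Set.inter_right_comm t u s, div_div_eq_mul_div]
  ring

theorem ipw_weight_mul_measureReal [IsFiniteMeasure μ] {s u t t' : Set Ω} (hs : MeasurableSet s)
    (hu : MeasurableSet u) (ht' : MeasurableSet t') (h : μ (t ∩ (u ∩ s)) ≠ 0) :
    1 / (μ[t|s]).toReal * ((μ[t'|u ∩ s]).toReal * (μ[t|s]).toReal /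
      ((μ[t|u ∩ s]).toReal * (μ[t'|s]).toReal)) * μ.real (t ∩ (u ∩ s))
      = μ.real s * (μ[u|t' ∩ s]).toReal := by
  have hst : μ (s ∩ t) ≠ 0 := fun h₀ =>
    h (measure_mono_null (Set.subset_inter (Set.inter_subset_right.trans Set.inter_subset_right)
      Set.inter_subset_left) h₀)
  have hπ : (μ[t|s]).toReal ≠ 0 :=
    (ENNReal.toReal_pos (cond_pos_of_inter_ne_zero hs hst).ne' (measure_ne_top _ _)).ne'
  calc _ = (μ[t'|u ∩ s]).toReal / (μ[t|u ∩ s]).toReal * μ.real (t ∩ (u ∩ s))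
        / (μ[t'|s]).toReal := by field_simp
    _ = μ.real (t' ∩ (u ∩ s)) / (μ[t'|s]).toReal := by
        rw [cond_toReal_div_mul_measureReal_inter (hu.inter hs) h]
    _ = μ.real s * (μ[u|t' ∩ s]).toReal := measureReal_inter_div_cond_toReal hs ht'

end

theorem ipw_representation
    {Ω : Type*} [MeasurableSpace Ω] (P : Measure Ω) [IsProbabilityMeasure P]
    {𝕄 𝕎 : Type*} [Fintype 𝕄] [MeasurableSpace 𝕄] [MeasurableSingletonClass 𝕄]
    [Fintype 𝕎] [MeasurableSpace 𝕎] [MeasurableSingletonClass 𝕎]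
    (A : Ω → Bool) (M : Ω → 𝕄) (W : Ω → 𝕎)
    (hA : Measurable A) (hM : Measurable M) (hW : Measurable W)
    (positivity : ∀ (α : Bool) (m : 𝕄) (w : 𝕎),
      0 < P {ω | A ω = α ∧ M ω = m ∧ W ω = w})
    (a a' : Bool)
    (Y : Ω → ℝ) (hY_meas : Measurable Y) (hY_bdd : ∃ C : ℝ, ∀ ω, |Y ω| ≤ C)
    (πA : Bool → 𝕎 → ℝ)
    (hπA : ∀ (α : Bool) (w : 𝕎), πA α w = ((P[|{ω | W ω = w}]) {ω | A ω = α}).toReal)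
    (πAM : Bool → 𝕄 → 𝕎 → ℝ)
    (hπAM : ∀ (α : Bool) (m : 𝕄) (w : 𝕎),
      πAM α m w = ((P[|{ω | M ω = m ∧ W ω = w}]) {ω | A ω = α}).toReal)
    (b : 𝕄 → 𝕎 → ℝ)
    (hb : ∀ (m : 𝕄) (w : 𝕎),
      b m w = ∫ ω, Y ω ∂(P[|{ω | A ω = a ∧ M ω = m ∧ W ω = w}]))
    (ξ : 𝕎 → ℝ)
    (hξ : ∀ w : 𝕎,
      ξ w = ∑ m : 𝕄, b m w * ((P[|{ω | A ω = a' ∧ W ω = w}]) {ω | M ω = m}).toReal)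
    (r : 𝕄 → 𝕎 → ℝ)
    (hr : ∀ (m : 𝕄) (w : 𝕎),
      r m w = (πAM a' m w * πA a w) / (πAM a m w * πA a' w))
    (ψ : ℝ) (hψ : ψ = ∑ w : 𝕎, (P {ω | W ω = w}).toReal * ξ w) :
    ∫ ω, ((if A ω = a then (1 : ℝ) else 0) / πA a (W ω)) * r (M ω) (W ω) * Y ω ∂P
      = ψ := by
  obtain ⟨C, hC⟩ := hY_bdd
  have hY : Integrable Y P := .of_bound hY_meas.aestronglyMeasurable C (.of_forall hC)
  have hAMW : Measurable fun ω => (A ω, M ω, W ω) := hA.prodMk (hM.prodMk hW)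
  calc _ = ∑ t : Bool × 𝕄 × 𝕎, (if t.1 = a then (1 : ℝ) else 0) / πA a t.2.2 * r t.2.1 t.2.2
        * ∫ ω in (fun ω => (A ω, M ω, W ω)) ⁻¹' {t}, Y ω ∂P :=
        integral_mul_comp_eq_sum_setIntegral hAMW _ hY
    _ = ∑ w, ∑ m, 1 / πA a w * r m w
        * ∫ ω in {ω | A ω = a} ∩ ({ω | M ω = m} ∩ {ω | W ω = w}), Y ω ∂P := by
        rw [Fintype.sum_prod_type, Fintype.sum_eq_single a fun α hα => by simp [hα],
          Fintype.sum_prod_type, Finset.sum_comm]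
        simp only [if_true, Set.preimage, Set.mem_singleton_iff, Prod.mk.injEq, Set.ofPred_and]
    _ = ψ := by
        rw [hψ]
        refine Finset.sum_congr rfl fun w _ => ?_
        rw [hξ, Finset.mul_sum]
        refine Finset.sum_congr rfl fun m _ => ?_
        have hWw : MeasurableSet {ω | W ω = w} := hW (measurableSet_singleton w)
        have hMm : MeasurableSet {ω | M ω = m} := hM (measurableSet_singleton m)
        have hAa' : MeasurableSet {ω | A ω = a'} := hA (measurableSet_singleton a')
        have hpos := (positivity a m w).ne'
        simp only [hr, hπA, hπAM, hb, Set.ofPred_and] at hpos ⊢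
        rw [setIntegral_eq_measureReal_smul_integral_cond (measure_ne_top _ _), smul_eq_mul,
          ← mul_assoc, ipw_weight_mul_measureReal hWw hMm hAa' hpos, measureReal_def]
        ring
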